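/- If ν : G^4 → K^× is a 4-cocycle on a finite group G with values in the multiplicative group of an algebraically closed field K of characteristic zero, then there exists a finite group G' and a surjective homomorphism p : G' → G such that the pullback class p^*[ν] vanishes in H^4(G', K^×). -/
import Mathlib


/-- The coboundary of a 3-cochain `λ : G³ → M` (trivial action, multiplicative notation). -/
def coboundary3 {G M : Type*} [Group G] [CommGroup M] (l : G → G → G → M) :
    G → G → G → G → M := fun g1 g2 g3 g4 =>
  l g2 g3 g4 * (l (g1 * g2) g3 g4)⁻¹ * l g1 (g2 * g3) g4 *
    (l g1 g2 (g3 * g4))⁻¹ * l g1 g2 g3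

/-- The 4-cocycle condition for `ν : G⁴ → M` (trivial action): its coboundary is trivial. -/
def IsCocycle4 {G M : Type*} [Group G] [CommGroup M] (ν : G → G → G → G → M) : Prop :=
  ∀ g1 g2 g3 g4 g5 : G,
    ν g2 g3 g4 g5 * (ν (g1 * g2) g3 g4 g5)⁻¹ * ν g1 (g2 * g3) g4 g5 *
      (ν g1 g2 (g3 * g4) g5)⁻¹ * ν g1 g2 g3 (g4 * g5) * (ν g1 g2 g3 g4)⁻¹ = 1

set_option linter.unusedSectionVars false

section Mod
variable (G A : Type) [Group G] [CommGroup A]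

/-- right-translation action on functions `G → A` -/
def rtr (g : G) : (G → A) →* (G → A) where
  toFun f := fun x => f (x * g)
  map_one' := rfl
  map_mul' _ _ := rfl

variable {G A}

theorem rtr_mul (g h : G) (f : G → A) : rtr G A (g * h) f = rtr G A g (rtr G A h f) := by
  funext x; simp [rtr, mul_assoc]

theorem rtr_one (f : G → A) : rtr G A 1 f = f := by funext x; simp [rtr]

variable (G A)

def constH : A →* (G → A) where
  toFun a := fun _ => a
  map_one' := rfl
  map_mul' _ _ := rfl

def Csub : Subgroup (G → A) := (constH G A).range

abbrev Qt := (G → A) ⧸ Csub G A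

def piQ : (G → A) →* Qt G A := QuotientGroup.mk' _

theorem piQ_surj : Function.Surjective (piQ G A) := QuotientGroup.mk'_surjective _

def actQ (g : G) : Qt G A →* Qt G A :=
  QuotientGroup.map _ _ (rtr G A g) (by
    rintro f ⟨a, rfl⟩
    exact ⟨a, rfl⟩)

variable {G A}

theorem actQ_piQ (g : G) (f : G → A) : actQ G A g (piQ G A f) = piQ G A (rtr G A g f) :=
  QuotientGroup.map_mk' _ _ _ _ _

theorem actQ_mul (g h : G) (q : Qt G A) : actQ G A (g * h) q = actQ G A g (actQ G A h q) := by
  obtain ⟨f, rfl⟩ := piQ_surj G A q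
  simp [actQ_piQ, rtr_mul]

theorem actQ_one (q : Qt G A) : actQ G A 1 q = q := by
  obtain ⟨f, rfl⟩ := piQ_surj G A q
  simp [actQ_piQ, rtr_one]

theorem piQ_const (a : A) : piQ G A (constH G A a) = 1 :=
  (QuotientGroup.eq_one_iff _).mpr ⟨a, rfl⟩

variable (G A)

def iotaQ : Qt G A →* (G → Qt G A) where
  toFun q := fun x => actQ G A x q
  map_one' := by funext x; simp
  map_mul' q r := by funext x; simp

def CsubI : Subgroup (G → Qt G A) := (iotaQ G A).range

abbrev M2 := (G → Qt G A) ⧸ CsubI G A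

def piM : (G → Qt G A) →* M2 G A := QuotientGroup.mk' _

theorem piM_surj : Function.Surjective (piM G A) := QuotientGroup.mk'_surjective _

theorem rtr_iotaQ (g : G) (q : Qt G A) :
    rtr G (Qt G A) g (iotaQ G A q) = iotaQ G A (actQ G A g q) := by
  funext x; simp [iotaQ, rtr, ← actQ_mul]

def actM (g : G) : M2 G A →* M2 G A :=
  QuotientGroup.map _ _ (rtr G (Qt G A) g) (by
    rintro f ⟨q, rfl⟩
    exact ⟨actQ G A g q, (rtr_iotaQ G A g q).symm⟩)

variable {G A}

theorem actM_piM (g : G) (f : G → Qt G A) :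
    actM G A g (piM G A f) = piM G A (rtr G (Qt G A) g f) :=
  QuotientGroup.map_mk' _ _ _ _ _

theorem actM_mul (g h : G) (q : M2 G A) : actM G A (g * h) q = actM G A g (actM G A h q) := by
  obtain ⟨f, rfl⟩ := piM_surj G A q
  simp [actM_piM, rtr_mul]

theorem actM_one (q : M2 G A) : actM G A 1 q = q := by
  obtain ⟨f, rfl⟩ := piM_surj G A q
  simp [actM_piM, rtr_one]

theorem piM_iota (q : Qt G A) : piM G A (iotaQ G A q) = 1 :=
  (QuotientGroup.eq_one_iff _).mpr ⟨q, rfl⟩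

theorem iotaQ_inj : Function.Injective (iotaQ G A) := by
  intro q r h
  have := congrFun h 1
  simpa [iotaQ, actQ_one] using this

instance [Finite G] [Finite A] : Finite (Qt G A) := Quotient.finite _
instance [Finite G] [Finite A] : Finite (M2 G A) := Quotient.finite _

end Mod

theorem eq_of_additive {M : Type} [CommGroup M] {x y : M}
    (h : Additive.ofMul x = Additive.ofMul y) : x = y := h

theorem chase' {M : Type} [CommGroup M] {y z p q : M} (h : p = q) (hac : y * p = z * q) :
    y = z := by
  rw [h] at hac; exact mul_right_cancel hac

theorem chase2' {M : Type} [CommGroup M] {y z p1 q1 p2 q2 : M} (h1 : p1 = q1) (h2 : p2 = q2)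
    (hac : y * p1 * p2 = z * q1 * q2) : y = z := by
  rw [h1, h2] at hac
  exact mul_right_cancel (mul_right_cancel hac)

section Ext
variable {G M : Type} [Group G] [CommGroup M]

structure ExtData (G M : Type) [Group G] [CommGroup M] where
  act : G → M →* M
  c : G → G → M
  hact_mul : ∀ g h m, act (g * h) m = act g (act h m)
  hact_one : ∀ m, act 1 m = m
  hc : ∀ a b d, act a (c b d) * c a (b * d) = c (a * b) d * c a b
  hc11 : c 1 1 = 1

variable (D : ExtData G M)

theorem ExtData.hc1g (g : G) : D.c 1 g = 1 := by
  have h := D.hc 1 1 g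
  simp only [D.hact_one, one_mul, D.hc11, mul_one] at h
  exact mul_right_cancel (b := D.c 1 g) (by rw [h, one_mul])

theorem ExtData.hcg1 (g : G) : D.c g 1 = 1 := by
  have h := D.hc g 1 1
  simp only [D.hc11, map_one, mul_one, one_mul] at h
  exact mul_left_cancel (a := D.c g 1) (by rw [← h, mul_one])

structure ExtT {G M : Type} [Group G] [CommGroup M] (D : ExtData G M) where
  a : M
  g : G

instance : Mul (ExtT D) := ⟨fun x y => ⟨x.a * D.act x.g y.a * D.c x.g y.g, x.g * y.g⟩⟩
instance : One (ExtT D) := ⟨⟨1, 1⟩⟩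
instance : Inv (ExtT D) := ⟨fun x => ⟨(D.act x.g⁻¹ x.a * D.c x.g⁻¹ x.g)⁻¹, x.g⁻¹⟩⟩

theorem ExtT.mul_a (x y : ExtT D) : (x * y).a = x.a * D.act x.g y.a * D.c x.g y.g := rfl
theorem ExtT.mul_g (x y : ExtT D) : (x * y).g = x.g * y.g := rfl
theorem ExtT.one_a : (1 : ExtT D).a = 1 := rfl
theorem ExtT.one_g : (1 : ExtT D).g = 1 := rfl

theorem ExtT.ext' {x y : ExtT D} (h1 : x.a = y.a) (h2 : x.g = y.g) : x = y := by
  cases x; cases y; cases h1; cases h2; rfl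

instance extGroup : Group (ExtT D) :=
  Group.ofLeftAxioms
    (fun x y z => by
      refine ExtT.ext' D ?_ ?_
      · show (x*y).a * D.act (x*y).g z.a * D.c (x*y).g z.g
           = x.a * D.act x.g (y*z).a * D.c x.g (y*z).g
        rw [ExtT.mul_a, ExtT.mul_g, ExtT.mul_a, ExtT.mul_g, D.hact_mul, map_mul, map_mul]
        refine chase' (h := D.hc x.g y.g z.g) ?_
        exact eq_of_additive (by simp only [ofMul_mul]; abel)
      · show (x.g * y.g) * z.g = x.g * (y.g * z.g)
        exact mul_assoc _ _ _)
    (fun x => by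
      refine ExtT.ext' D ?_ (one_mul _)
      show (1:M) * D.act 1 x.a * D.c 1 x.g = x.a
      rw [D.hact_one, D.hc1g, one_mul, mul_one])
    (fun x => by
      refine ExtT.ext' D ?_ (inv_mul_cancel _)
      show (D.act x.g⁻¹ x.a * D.c x.g⁻¹ x.g)⁻¹ * D.act x.g⁻¹ x.a * D.c x.g⁻¹ x.g = 1
      group)

def projE : ExtT D →* G where
  toFun := ExtT.g
  map_one' := rfl
  map_mul' _ _ := rfl

theorem projE_surj : Function.Surjective (projE D) := fun g => ⟨⟨1, g⟩, rfl⟩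

instance [Finite G] [Finite M] : Finite (ExtT D) :=
  Finite.of_surjective (fun p : M × G => ⟨p.1, p.2⟩) (fun x => ⟨⟨x.a, x.g⟩, rfl⟩)

end Ext

section Chase
variable {G A : Type} [Group G] [CommGroup A]

def h3c (ν : G → G → G → G → A) : G → G → G → (G → A) := fun a b c => fun x => ν x a b c

theorem F1 {ν : G → G → G → G → A} (hν : IsCocycle4 ν) (a b c d : G) :
    rtr G A a (h3c ν b c d) * (h3c ν (a*b) c d)⁻¹ * h3c ν a (b*c) d * (h3c ν a b (c*d))⁻¹ *
      h3c ν a b c = constH G A (ν a b c d) := by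
  funext x
  show ν (x*a) b c d * (ν x (a*b) c d)⁻¹ * ν x a (b*c) d * (ν x a b (c*d))⁻¹ * ν x a b c
      = ν a b c d
  refine chase' (h := hν x a b c d) ?_
  exact eq_of_additive (by simp only [ofMul_mul, ofMul_inv, ofMul_one, mul_one]; abel)

def c3c (ν : G → G → G → G → A) : G → G → G → Qt G A := fun a b c => piQ G A (h3c ν a b c)

theorem c3c_piQ (ν : G → G → G → G → A) (a b c : G) :
    piQ G A (h3c ν a b c) = c3c ν a b c := rfl

theorem F2 {ν : G → G → G → G → A} (hν : IsCocycle4 ν) (a b c d : G) :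
    actQ G A a (c3c ν b c d) * (c3c ν (a*b) c d)⁻¹ * c3c ν a (b*c) d * (c3c ν a b (c*d))⁻¹ *
      c3c ν a b c = 1 := by
  simp only [← c3c_piQ, actQ_piQ, ← map_mul, ← map_inv]
  rw [F1 hν a b c d, piQ_const]

def h2c (ν : G → G → G → G → A) : G → G → (G → Qt G A) := fun a b => fun x => c3c ν x a b

theorem F3 {ν : G → G → G → G → A} (hν : IsCocycle4 ν) (a b c : G) :
    rtr G (Qt G A) a (h2c ν b c) * (h2c ν (a*b) c)⁻¹ * h2c ν a (b*c) * (h2c ν a b)⁻¹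
      = iotaQ G A (c3c ν a b c) := by
  funext x
  show c3c ν (x*a) b c * (c3c ν x (a*b) c)⁻¹ * c3c ν x a (b*c) * (c3c ν x a b)⁻¹
      = actQ G A x (c3c ν a b c)
  refine chase' (h := F2 hν x a b c) ?_
  exact eq_of_additive (by simp only [ofMul_mul, ofMul_inv, ofMul_one, mul_one]; abel)

def c2c (ν : G → G → G → G → A) : G → G → M2 G A := fun a b => piM G A (h2c ν a b)

theorem c2c_piM (ν : G → G → G → G → A) (a b : G) :
    piM G A (h2c ν a b) = c2c ν a b := rfl

theorem F4 {ν : G → G → G → G → A} (hν : IsCocycle4 ν) (a b c : G) :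
    actM G A a (c2c ν b c) * (c2c ν (a*b) c)⁻¹ * c2c ν a (b*c) * (c2c ν a b)⁻¹ = 1 := by
  simp only [← c2c_piM, actM_piM, ← map_mul, ← map_inv]
  rw [F3 hν a b c, piM_iota]

theorem F4' {ν : G → G → G → G → A} (hν : IsCocycle4 ν) (a b d : G) :
    actM G A a (c2c ν b d) * c2c ν a (b*d) = c2c ν (a*b) d * c2c ν a b := by
  refine chase' (h := (F4 hν a b d).symm) ?_
  exact eq_of_additive (by simp only [ofMul_mul, ofMul_inv, ofMul_one, mul_one]; abel)

def betac (ν : G → G → G → G → A) : M2 G A := (c2c ν 1 1)⁻¹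

def c2nc (ν : G → G → G → G → A) : G → G → M2 G A :=
  fun a b => c2c ν a b * actM G A a (betac ν)

theorem c2n_11 (ν : G → G → G → G → A) : c2nc ν 1 1 = 1 := by
  unfold c2nc betac
  rw [actM_one, mul_inv_cancel]

theorem c2n_cocycle {ν : G → G → G → G → A} (hν : IsCocycle4 ν) (a b d : G) :
    actM G A a (c2nc ν b d) * c2nc ν a (b*d) = c2nc ν (a*b) d * c2nc ν a b := by
  unfold c2nc
  rw [map_mul, ← actM_mul]
  refine chase' (h := (F4' hν a b d).symm) ?_
  exact eq_of_additive (by simp only [ofMul_mul, ofMul_inv, ofMul_one, mul_one]; abel)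

def Dd (ν : G → G → G → G → A) (hν : IsCocycle4 ν) : ExtData G (M2 G A) where
  act := actM G A
  c := c2nc ν
  hact_mul := actM_mul
  hact_one := actM_one
  hc := c2n_cocycle hν
  hc11 := c2n_11 ν

theorem Dd_act (ν : G → G → G → G → A) (hν : IsCocycle4 ν) : (Dd ν hν).act = actM G A := rfl
theorem Dd_c (ν : G → G → G → G → A) (hν : IsCocycle4 ν) : (Dd ν hν).c = c2nc ν := rfl

theorem projE_apply {ν : G → G → G → G → A} {hν : IsCocycle4 ν} (x : ExtT (Dd ν hν)) :
    projE (Dd ν hν) x = x.g := rfl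

def dEc (ν : G → G → G → G → A) (hν : IsCocycle4 ν) : ExtT (Dd ν hν) → M2 G A :=
  fun x => (x.a)⁻¹ * (betac ν)⁻¹

theorem F5 {ν : G → G → G → G → A} (hν : IsCocycle4 ν) (x y : ExtT (Dd ν hν)) :
    actM G A x.g (dEc ν hν y) * (dEc ν hν (x*y))⁻¹ * dEc ν hν x
      = c2c ν x.g y.g := by
  unfold dEc
  rw [ExtT.mul_a]
  simp only [Dd_act, Dd_c, projE_apply, c2nc, map_mul, map_inv, mul_inv_rev, inv_inv]
  exact eq_of_additive (by simp only [ofMul_mul, ofMul_inv, ofMul_one, mul_one]; abel)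

end Chase

set_option maxHeartbeats 1000000 in
theorem key (G : Type) [Group G] [Finite G] (A : Type) [CommGroup A] [Finite A]
    (ν : G → G → G → G → A) (hν : IsCocycle4 ν) :
    ∃ (G' : Type) (_ : Group G') (_ : Finite G') (p : G' →* G),
      Function.Surjective p ∧
      ∃ ψ : G' → G' → G' → A,
        (fun g1 g2 g3 g4 : G' => ν (p g1) (p g2) (p g3) (p g4)) = coboundary3 ψ := by
  classical
  refine ⟨ExtT (Dd ν hν), inferInstance, inferInstance, projE (Dd ν hν),
    projE_surj _, ?_⟩
  have houtM : ∀ m : M2 G A, piM G A m.out = m := fun m => QuotientGroup.out_eq' m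
  have houtQ : ∀ q : Qt G A, piQ G A q.out = q := fun q => QuotientGroup.out_eq' q
  -- level 2: lift the coboundary witness of c2c ∘ p
  have hmem2 : ∀ x y : ExtT (Dd ν hν), ∃ q : Qt G A,
      iotaQ G A q = h2c ν x.g y.g *
        (rtr G (Qt G A) x.g ((dEc ν hν y).out) * ((dEc ν hν (x*y)).out)⁻¹ *
          (dEc ν hν x).out)⁻¹ := by
    intro x y
    apply MonoidHom.mem_range.mp
    apply (QuotientGroup.eq_one_iff _).mp
    show piM G A _ = 1
    simp only [map_mul, map_inv, ← actM_piM, houtM, c2c_piM]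
    rw [F5 hν x y]
    exact mul_inv_cancel _
  choose q2 hq2 using hmem2
  have F6 : ∀ x y z : ExtT (Dd ν hν),
      actQ G A x.g (q2 y z) * (q2 (x*y) z)⁻¹ * q2 x (y*z) * (q2 x y)⁻¹
        = c3c ν x.g y.g z.g := by
    intro x y z
    apply iotaQ_inj (G := G) (A := A)
    simp only [map_mul, map_inv, ← rtr_iotaQ, hq2, ExtT.mul_g, mul_assoc, rtr_mul,
      mul_inv_rev, inv_inv]
    refine chase' (h := (F3 hν x.g y.g z.g).symm) ?_
    exact eq_of_additive (by simp only [ofMul_mul, ofMul_inv, ofMul_one, mul_one]; abel)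
  -- level 3: lift again
  have hmem3 : ∀ x y z : ExtT (Dd ν hν), ∃ a : A,
      constH G A a = h3c ν x.g y.g z.g *
        (rtr G A x.g ((q2 y z).out) * ((q2 (x*y) z).out)⁻¹ *
          (q2 x (y*z)).out * ((q2 x y).out)⁻¹)⁻¹ := by
    intro x y z
    apply MonoidHom.mem_range.mp
    apply (QuotientGroup.eq_one_iff _).mp
    show piQ G A _ = 1
    simp only [map_mul, map_inv, ← actQ_piQ, houtQ, c3c_piQ]
    rw [F6 x y z]
    exact mul_inv_cancel _
  choose a3 ha3 using hmem3
  refine ⟨a3, ?_⟩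
  funext x y z w
  simp only [projE_apply]
  have hinj : Function.Injective (constH G A) := fun a b h => congrFun h 1
  apply hinj
  have hfix : rtr G A x.g (constH G A (a3 y z w)) = constH G A (a3 y z w) := rfl
  simp only [coboundary3, map_mul, map_inv]
  rw [← hfix]
  simp only [ha3, ExtT.mul_g, mul_assoc, map_mul, map_inv, rtr_mul, mul_inv_rev, inv_inv]
  refine chase' (h := F1 hν x.g y.g z.g w.g) ?_
  exact eq_of_additive (by simp only [ofMul_mul, ofMul_inv, ofMul_one, mul_one]; abel)

theorem cob_cocycle {G M : Type} [Group G] [CommGroup M] (l : G → G → G → M) :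
    IsCocycle4 (coboundary3 l) := by
  intro g1 g2 g3 g4 g5
  simp only [coboundary3, mul_assoc, mul_inv_rev, inv_inv]
  exact eq_of_additive (by simp only [ofMul_mul, ofMul_inv, ofMul_one, mul_one]; abel)


set_option maxHeartbeats 1000000 in
/-- If `ν : G⁴ → K^×` is a 4-cocycle on a finite group `G` with values in the
multiplicative group of an algebraically closed field `K` of characteristic zero, then there
is a finite group `G'` and a surjective homomorphism `p : G' → G` such that the pullback
class `p^*[ν]` vanishes in `H⁴(G', K^×)`, i.e. the pullback cocycle is a coboundary. -/
theorem stmt_13 (G : Type) [Group G] [Finite G]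
    (K : Type) [Field K] [IsAlgClosed K] [CharZero K]
    (ν : G → G → G → G → Kˣ) (hν : IsCocycle4 ν) :
    ∃ (G' : Type) (_ : Group G') (_ : Finite G') (p : G' →* G),
      Function.Surjective p ∧
      ∃ ψ : G' → G' → G' → Kˣ,
        (fun g1 g2 g3 g4 : G' => ν (p g1) (p g2) (p g3) (p g4)) = coboundary3 ψ := by
  classical
  have _inst := Fintype.ofFinite G
  have hN : 0 < Nat.card G := Nat.card_pos
  set N := Nat.card G with hNdef
  set lam : G → G → G → Kˣ := fun a b c => ∏ g : G, ν a b c g with hlamdef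
  -- averaging: ν ^ N is the coboundary of lam
  have hpow : ∀ a b c d, ν a b c d ^ N = coboundary3 lam a b c d := by
    intro a b c d
    have h : ∀ g : G, ν a b c d = ν b c d g * (ν (a*b) c d g)⁻¹ * ν a (b*c) d g *
        (ν a b (c*d) g)⁻¹ * ν a b c (d*g) := by
      intro g
      refine chase' (h := hν a b c d g) ?_
      exact eq_of_additive (by simp only [ofMul_mul, ofMul_inv, ofMul_one, mul_one]; abel)
    have hre : ∏ g : G, ν a b c (d*g) = ∏ g : G, ν a b c g :=
      Fintype.prod_bijective (fun g => d*g) (Group.mulLeft_bijective d) _ _ (fun g => rfl)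
    have h3 : ν a b c d ^ N = ∏ _g : G, ν a b c d := by
      simp [Finset.prod_const, Finset.card_univ, hNdef, Nat.card_eq_fintype_card]
    rw [h3, Finset.prod_congr rfl (fun g _ => h g)]
    simp only [Finset.prod_mul_distrib, Finset.prod_inv_distrib, coboundary3, hlamdef]
    rw [hre]
  -- extract N-th roots
  have hroot : ∀ u : Kˣ, ∃ w : Kˣ, w ^ N = u := by
    intro u
    obtain ⟨z, hz⟩ := IsAlgClosed.exists_pow_nat_eq (u : K) hN
    have hz0 : z ≠ 0 := by
      intro h0
      rw [h0, zero_pow hN.ne'] at hz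
      exact Units.ne_zero u hz.symm
    exact ⟨Units.mk0 z hz0, Units.ext (by simpa using hz)⟩
  choose rt hrt using hroot
  set κ : G → G → G → Kˣ := fun a b c => rt (lam a b c) with hκdef
  have hkpow : ∀ a b c : G, κ a b c ^ N = lam a b c := fun a b c => hrt _
  set ν0 : G → G → G → G → Kˣ :=
    fun a b c d => ν a b c d * (coboundary3 κ a b c d)⁻¹ with hν0def
  have hcob : ∀ a b c d, coboundary3 κ a b c d ^ N = coboundary3 lam a b c d := by
    intro a b c d
    simp only [coboundary3, mul_pow, inv_pow, hkpow]
  have hν0N : ∀ a b c d, ν0 a b c d ^ N = 1 := by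
    intro a b c d
    rw [hν0def]
    simp only [mul_pow, inv_pow, hcob, hpow, mul_inv_cancel]
  have hc0 : IsCocycle4 ν0 := by
    intro a b c d e
    simp only [hν0def]
    refine chase2' (h1 := cob_cocycle κ a b c d e) (h2 := (hν a b c d e).symm) ?_
    exact eq_of_additive (by simp only [ofMul_mul, ofMul_inv, ofMul_one, mul_one]; abel)
  haveI : NeZero N := ⟨hN.ne'⟩
  set ν1 : G → G → G → G → ↥(rootsOfUnity N K) :=
    fun a b c d => ⟨ν0 a b c d, (mem_rootsOfUnity N _).mpr (hν0N a b c d)⟩ with hν1def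
  have hc1 : IsCocycle4 ν1 := by
    intro a b c d e
    have := hc0 a b c d e
    apply Subtype.ext
    push_cast [hν1def]
    simpa [hν0def] using this
  obtain ⟨G', iG, iF, p, hsurj, ψ1, hψ1⟩ := key G (↥(rootsOfUnity N K)) ν1 hc1
  refine ⟨G', iG, iF, p, hsurj,
    fun x y z => ((ψ1 x y z : Kˣ) * κ (p x) (p y) (p z)), ?_⟩
  funext x y z w
  have H : ν1 (p x) (p y) (p z) (p w) = coboundary3 ψ1 x y z w := by
    have := congrFun (congrFun (congrFun (congrFun hψ1 x) y) z) w
    simpa using this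
  have H' : (ν1 (p x) (p y) (p z) (p w) : Kˣ) = ((coboundary3 ψ1 x y z w : ↥(rootsOfUnity N K)) : Kˣ) :=
    congrArg _ H
  rw [hν1def] at H'
  push_cast [coboundary3] at H'
  rw [hν0def] at H'
  simp only [coboundary3, mul_inv_rev, inv_inv, map_mul] at H' ⊢
  refine chase' (h := H'.symm) ?_
  exact eq_of_additive (by simp only [ofMul_mul, ofMul_inv, ofMul_one, mul_one]; abel)
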